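/- In any B_{q,t}-module datum, for every Laurent polynomial a ∈ K[z₁^{±1}, z₂^{±1}] that is symmetric under exchanging z₁ and z₂, the composite d₋ d₋ (z₁ − q z₂) a(z₁,z₂) d₊ d₊ : V₀ → V₀ is the zero operator, where a(z₁,z₂) denotes the operator on V₂ obtained by evaluating a at the commuting invertible operators z₁, z₂ on V₂. -/

import Mathlib

/- Common setup: the field K = ℚ(q,t) and the notion of a B_{q,t}-module datum,
i.e. a family of K-vector spaces V_k (k ≥ 0) together with maps d₊ : V_k → V_{k+1},
d₋ : V_k → V_{k−1}, invertible operators z_i (1 ≤ i ≤ k) and operators T_i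
(1 ≤ i ≤ k−1) on V_k (the T_i are invertible as a consequence of the quadratic
Hecke relation, so we record them as units), subject to the defining relations
of the double Dyck path algebra 𝔹_{q,t}.  Operators compose right-to-left;
`Module.End` multiplication is composition. -/

noncomputable section

/-- The field ℚ(q,t). -/
abbrev Kq : Type := FractionRing (MvPolynomial (Fin 2) ℚ)

/-- The variable q ∈ ℚ(q,t). -/
def qv : Kq := algebraMap (MvPolynomial (Fin 2) ℚ) Kq (MvPolynomial.X 0)

/-- The variable t ∈ ℚ(q,t). -/
def tv : Kq := algebraMap (MvPolynomial (Fin 2) ℚ) Kq (MvPolynomial.X 1)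

/-- φ := (q−1)^{−1}(d₊d₋ − d₋d₊), an operator on V_{k+1}. -/
def phiE {V : ℕ → Type*} [∀ k, AddCommGroup (V k)] [∀ k, Module Kq (V k)]
    (dp : ∀ k, V k →ₗ[Kq] V (k + 1)) (dm : ∀ k, V (k + 1) →ₗ[Kq] V k) (k : ℕ) :
    Module.End Kq (V (k + 1)) :=
  (qv - 1)⁻¹ • (dp k ∘ₗ dm k - dm (k + 1) ∘ₗ dp (k + 1))

/-- A B_{q,t}-module datum on the family of K-vector spaces `V`.
`z k i` is the operator z_i on V_k (meaningful for 1 ≤ i ≤ k) and `T k i` is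
the operator T_i on V_k (meaningful for 1 ≤ i ≤ k−1); all relations are imposed
on every V_k on which all their factors are defined. -/
structure BqtDatum (V : ℕ → Type*) [∀ k, AddCommGroup (V k)] [∀ k, Module Kq (V k)] where
  /-- d₊ : V_k → V_{k+1} -/
  dp : ∀ k, V k →ₗ[Kq] V (k + 1)
  /-- d₋ : V_{k+1} → V_k -/
  dm : ∀ k, V (k + 1) →ₗ[Kq] V k
  /-- the pairwise commuting invertible operators z_1, …, z_k on V_k -/
  z : ∀ k, ℕ → (Module.End Kq (V k))ˣ
  /-- the operators T_1, …, T_{k−1} on V_k -/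
  T : ∀ k, ℕ → (Module.End Kq (V k))ˣ
  z_comm : ∀ k i j, 1 ≤ i → i ≤ k → 1 ≤ j → j ≤ k → z k i * z k j = z k j * z k i
  hecke : ∀ k i, 1 ≤ i → i + 1 ≤ k →
    ((T k i : Module.End Kq (V k)) - 1) * ((T k i : Module.End Kq (V k)) + qv • 1) = 0
  braid : ∀ k i, 1 ≤ i → i + 2 ≤ k →
    T k i * T k (i + 1) * T k i = T k (i + 1) * T k i * T k (i + 1)
  T_far : ∀ k i j, 1 ≤ i → i + 1 ≤ k → 1 ≤ j → j + 1 ≤ k → i + 1 < j →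
    T k i * T k j = T k j * T k i
  TzT : ∀ k i, 1 ≤ i → i + 1 ≤ k →
    (((T k i)⁻¹ : (Module.End Kq (V k))ˣ) : Module.End Kq (V k)) *
        (z k (i + 1) : Module.End Kq (V k)) *
        (((T k i)⁻¹ : (Module.End Kq (V k))ˣ) : Module.End Kq (V k)) =
      qv⁻¹ • (z k i : Module.End Kq (V k))
  zT_far : ∀ k i j, 1 ≤ i → i ≤ k → 1 ≤ j → j + 1 ≤ k → i ≠ j → i ≠ j + 1 →
    z k i * T k j = T k j * z k i
  dmdmT : ∀ k, (dm k ∘ₗ dm (k + 1)) ∘ₗ (T (k + 2) (k + 1) : Module.End Kq (V (k + 2))) =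
    dm k ∘ₗ dm (k + 1)
  dmT : ∀ k i, 1 ≤ i → i + 1 ≤ k →
    dm k ∘ₗ (T (k + 1) i : Module.End Kq (V (k + 1))) = (T k i : Module.End Kq (V k)) ∘ₗ dm k
  Tdpdp : ∀ k, (T (k + 2) 1 : Module.End Kq (V (k + 2))) ∘ₗ (dp (k + 1) ∘ₗ dp k) =
    dp (k + 1) ∘ₗ dp k
  dpT : ∀ k i, 1 ≤ i → i + 1 ≤ k →
    dp k ∘ₗ (T k i : Module.End Kq (V k)) = (T (k + 1) (i + 1) : Module.End Kq (V (k + 1))) ∘ₗ dp k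
  phidm : ∀ k, qv • (phiE dp dm k ∘ₗ dm (k + 1)) =
    (dm (k + 1) ∘ₗ phiE dp dm (k + 1)) ∘ₗ (T (k + 2) (k + 1) : Module.End Kq (V (k + 2)))
  Tphidp : ∀ k, (T (k + 2) 1 : Module.End Kq (V (k + 2))) ∘ₗ (phiE dp dm (k + 1) ∘ₗ dp (k + 1)) =
    qv • (dp (k + 1) ∘ₗ phiE dp dm k)
  zdm : ∀ k i, 1 ≤ i → i ≤ k →
    (z k i : Module.End Kq (V k)) ∘ₗ dm k = dm k ∘ₗ (z (k + 1) i : Module.End Kq (V (k + 1)))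
  dpz : ∀ k i, 1 ≤ i → i ≤ k →
    dp k ∘ₗ (z k i : Module.End Kq (V k)) = (z (k + 1) (i + 1) : Module.End Kq (V (k + 1))) ∘ₗ dp k
  zmain : ∀ k, (z (k + 1) 1 : Module.End Kq (V (k + 1))) ∘ₗ
      (qv • (dp k ∘ₗ dm k) - dm (k + 1) ∘ₗ dp (k + 1)) =
    (qv * tv) • ((dp k ∘ₗ dm k - dm (k + 1) ∘ₗ dp (k + 1)) ∘ₗ
      (z (k + 1) (k + 1) : Module.End Kq (V (k + 1))))

namespace BqtDatum

variable {V : ℕ → Type*} [∀ k, AddCommGroup (V k)] [∀ k, Module Kq (V k)]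

/-- e_m := d₋ z₁^m d₊ : V₀ → V₀. -/
def eOp (D : BqtDatum V) (m : ℤ) : Module.End Kq (V 0) :=
  D.dm 0 ∘ₗ ((D.z 1 1 ^ m : (Module.End Kq (V 1))ˣ) : Module.End Kq (V 1)) ∘ₗ D.dp 0

end BqtDatum

-- ===== auxiliary lemmas =====

lemma qv_ne_zero : qv ≠ 0 := by
  intro h
  have h2 := (map_eq_zero_iff _
    (IsFractionRing.injective (MvPolynomial (Fin 2) ℚ) Kq)).mp h
  exact MvPolynomial.X_ne_zero (0 : Fin 2) h2

lemma one_add_qv_ne_zero : (1 : Kq) + qv ≠ 0 := by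
  have h1 : (1 : Kq) + qv
      = algebraMap (MvPolynomial (Fin 2) ℚ) Kq (1 + MvPolynomial.X 0) := by
    rw [map_add, map_one, qv]
  rw [h1]
  intro h
  have h2 := (map_eq_zero_iff _
    (IsFractionRing.injective (MvPolynomial (Fin 2) ℚ) Kq)).mp h
  have h3 := congrArg MvPolynomial.constantCoeff h2
  simp [MvPolynomial.constantCoeff_X] at h3


lemma helperA {K M : Type*} [Field K] [AddCommGroup M] [Module K M] (q : K) (x y : M) :
    y - q • x + (q * q - 1) • y = -q • (x - q • y) := by module

lemma helperB {K M : Type*} [Field K] [AddCommGroup M] [Module K M] (q : K) (P R B : M) :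
    P + (q - 1) • B - q • (R - (q - 1) • B) = P - q • R + (q * q - 1) • B := by module

lemma helperC {K M : Type*} [Field K] [AddCommGroup M] [Module K M] (q : K) (x : M) :
    (-q) • x + q • x = 0 := by module

section HeckeAux

variable {E : Type*} [Ring E] [Algebra Kq E] {u v T : Eˣ}

lemma hecke_sq (hhecke : ((T : E) - 1) * ((T : E) + qv • 1) = 0) :
    (T : E) * T = (T : E) + qv • (1 : E) - qv • (T : E) := by
  have h : ((T : E) * T + qv • (T : E)) - ((T : E) + qv • (1 : E)) = 0 := by
    rw [← hhecke, sub_mul, mul_add, one_mul, mul_smul_comm, mul_one]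
  have h' : (T : E) * T + qv • (T : E) = (T : E) + qv • (1 : E) := by
    rwa [sub_eq_zero] at h
  rw [← h']; abel

lemma hecke_inv (hhecke : ((T : E) - 1) * ((T : E) + qv • 1) = 0) :
    qv • ((↑T⁻¹ : E)) = (T : E) + (qv - 1) • (1 : E) := by
  have h2 := hecke_sq hhecke
  have key : (T : E) * ((T : E) + (qv - 1) • (1 : E)) = qv • (1 : E) := by
    rw [mul_add, mul_smul_comm, mul_one, h2, sub_smul, one_smul]
    abel
  have h3 : (↑T⁻¹ : E) * ((T : E) * ((T : E) + (qv - 1) • (1 : E)))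
      = (↑T⁻¹ : E) * (qv • (1 : E)) := by rw [key]
  rw [← mul_assoc, Units.inv_mul, one_mul, mul_smul_comm, mul_one] at h3
  rw [← h3]

lemma tut (hTzT : (↑T⁻¹ : E) * ↑v * ↑T⁻¹ = qv⁻¹ • ↑u) :
    (T : E) * ↑u * ↑T = qv • (↑v : E) := by
  have step : (T : E) * ((↑T⁻¹ : E) * ↑v * ↑T⁻¹) * ↑T = ↑v := by
    simp [mul_assoc, Units.inv_mul, Units.mul_inv_cancel_left, mul_one]
  have h2 : (T : E) * (qv⁻¹ • (↑u : E)) * ↑T = ↑v := by rw [← hTzT]; exact step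
  rw [mul_smul_comm, smul_mul_assoc] at h2
  rw [← h2, smul_smul, mul_inv_cancel₀ qv_ne_zero, one_smul]

lemma hTu (hhecke : ((T : E) - 1) * ((T : E) + qv • 1) = 0)
    (hTzT : (↑T⁻¹ : E) * ↑v * ↑T⁻¹ = qv⁻¹ • ↑u) :
    (T : E) * ↑u = ↑v * ↑T + (qv - 1) • (↑v : E) := by
  have h1 := tut hTzT
  have h2 : (T : E) * ↑u = ((T : E) * ↑u * ↑T) * ↑T⁻¹ := by
    rw [mul_assoc ((T : E) * ↑u), Units.mul_inv, mul_one]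
  rw [h2, h1, smul_mul_assoc, ← mul_smul_comm, hecke_inv hhecke, mul_add,
    mul_smul_comm, mul_one]

lemma hTv (hhecke : ((T : E) - 1) * ((T : E) + qv • 1) = 0)
    (hTzT : (↑T⁻¹ : E) * ↑v * ↑T⁻¹ = qv⁻¹ • ↑u) :
    (T : E) * ↑v = ↑u * ↑T - (qv - 1) • (↑v : E) := by
  have h1 := tut hTzT
  have hv : (↑v : E) = qv⁻¹ • ((T : E) * ↑u * ↑T) := by
    rw [h1, smul_smul, inv_mul_cancel₀ qv_ne_zero, one_smul]
  have e1 : (T : E) * ↑v = qv⁻¹ • ((T : E) * ((T : E) * ↑u * ↑T)) := by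
    rw [hv, mul_smul_comm]
  have e2 : (T : E) * ((T : E) * ↑u * ↑T) = ((T : E) * (T : E)) * ((↑u : E) * ↑T) := by
    rw [mul_assoc (T : E) (↑u : E) (↑T : E), ← mul_assoc]
  have e3 : ((T : E) * (T : E)) * ((↑u : E) * ↑T)
      = qv • (↑v : E) + qv • ((↑u : E) * ↑T) - qv • (qv • (↑v : E)) := by
    rw [hecke_sq hhecke, sub_mul, add_mul, smul_mul_assoc, smul_mul_assoc, one_mul,
      ← mul_assoc, h1]
  rw [e1, e2, e3]
  simp only [smul_sub, smul_add, smul_smul, inv_mul_cancel₀ qv_ne_zero, one_smul,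
    inv_mul_cancel_left₀ qv_ne_zero, sub_smul]
  abel

lemma comm_sum (hhecke : ((T : E) - 1) * ((T : E) + qv • 1) = 0)
    (hTzT : (↑T⁻¹ : E) * ↑v * ↑T⁻¹ = qv⁻¹ • ↑u) :
    Commute (T : E) ((↑u : E) + ↑v) := by
  show (T : E) * ((↑u : E) + ↑v) = ((↑u : E) + ↑v) * (T : E)
  rw [mul_add, add_mul, hTu hhecke hTzT, hTv hhecke hTzT]
  abel

lemma comm_prod (huv : u * v = v * u)
    (hhecke : ((T : E) - 1) * ((T : E) + qv • 1) = 0)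
    (hTzT : (↑T⁻¹ : E) * ↑v * ↑T⁻¹ = qv⁻¹ • ↑u) :
    Commute (T : E) ((↑u : E) * ↑v) := by
  have hc : (↑u : E) * ↑v = (↑v : E) * ↑u := by
    rw [← Units.val_mul, ← Units.val_mul, huv]
  show (T : E) * ((↑u : E) * ↑v) = ((↑u : E) * ↑v) * (T : E)
  calc (T : E) * ((↑u : E) * ↑v) = ((T : E) * ↑u) * ↑v := by rw [mul_assoc]
    _ = ((↑v : E) * ↑T + (qv - 1) • (↑v : E)) * ↑v := by rw [hTu hhecke hTzT]
    _ = (↑v : E) * ((T : E) * ↑v) + (qv - 1) • ((↑v : E) * ↑v) := by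
        rw [add_mul, smul_mul_assoc, mul_assoc]
    _ = (↑v : E) * ((↑u : E) * ↑T - (qv - 1) • (↑v : E))
          + (qv - 1) • ((↑v : E) * ↑v) := by rw [hTv hhecke hTzT]
    _ = ((↑v : E) * ↑u) * (T : E) := by
        rw [mul_sub, mul_smul_comm, ← mul_assoc]; abel
    _ = ((↑u : E) * ↑v) * (T : E) := by rw [← hc]

lemma unit_succ (w : Eˣ) (m : ℤ) : w * w ^ m = w ^ (m + 1) := by
  rw [add_comm, zpow_one_add]

lemma prec (huv : u * v = v * u) (n : ℤ) :
    (↑(u ^ (n + 2)) : E) + ↑(v ^ (n + 2))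
      = ((↑u : E) + ↑v) * ((↑(u ^ (n + 1)) : E) + ↑(v ^ (n + 1)))
        - (↑(u * v) : E) * ((↑(u ^ n) : E) + ↑(v ^ n)) := by
  have hC : Commute u v := huv
  have h2 : u * v * u ^ n = v * u ^ (n + 1) := by
    rw [huv, mul_assoc, unit_succ]
  have h3 : u * v * v ^ n = u * v ^ (n + 1) := by
    rw [mul_assoc, unit_succ]
  have h4 : u * u ^ (n + 1) = u ^ (n + 2) := by
    rw [unit_succ]; congr 1; ring
  have h5 : v * v ^ (n + 1) = v ^ (n + 2) := by
    rw [unit_succ]; congr 1; ring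
  rw [mul_add, mul_add, add_mul, add_mul, ← Units.val_mul, ← Units.val_mul,
    ← Units.val_mul, ← Units.val_mul, ← Units.val_mul, ← Units.val_mul,
    h2, h3, h4, h5, Units.val_mul, Units.val_mul]
  abel

lemma commP (huv : u * v = v * u)
    (hhecke : ((T : E) - 1) * ((T : E) + qv • 1) = 0)
    (hTzT : (↑T⁻¹ : E) * ↑v * ↑T⁻¹ = qv⁻¹ • ↑u) :
    ∀ n : ℤ, Commute (T : E) ((↑(u ^ n) : E) + ↑(v ^ n)) := by
  have hsum := comm_sum hhecke hTzT
  have hprodE : Commute (T : E) (↑(u * v) : E) := by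
    rw [Units.val_mul]; exact comm_prod huv hhecke hTzT
  have key : ∀ n : ℤ, Commute (T : E) ((↑(u ^ n) : E) + ↑(v ^ n))
      ∧ Commute (T : E) ((↑(u ^ (n + 1)) : E) + ↑(v ^ (n + 1))) := by
    intro n
    induction n using Int.induction_on with
    | zero =>
      constructor
      · simp only [zpow_zero, Units.val_one]
        exact (Commute.one_right _).add_right (Commute.one_right _)
      · simp only [zero_add, zpow_one]
        exact hsum
    | succ i ih =>
      refine ⟨ih.2, ?_⟩
      have hr := prec (u := u) (v := v) huv (i : ℤ)
      have e1 : ((i : ℤ) + 1 + 1) = (i : ℤ) + 2 := by ring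
      rw [e1, hr]
      exact ((hsum.mul_right ih.2).sub_right (hprodE.mul_right ih.1))
    | pred i ih =>
      have hwinv : Commute (T : E) (↑((u * v)⁻¹) : E) :=
        hprodE.units_inv_right
      have e2 : (-(i : ℤ) - 1 + 1) = -(i : ℤ) := by ring
      refine ⟨?_, by rw [e2]; exact ih.1⟩
      have hr := prec (u := u) (v := v) huv (-(i : ℤ) - 1)
      have e3 : (-(i : ℤ) - 1 + 2) = -(i : ℤ) + 1 := by ring
      rw [e3, e2] at hr
      have step : (↑(u * v) : E) * ((↑(u ^ (-(i : ℤ) - 1)) : E) + ↑(v ^ (-(i : ℤ) - 1)))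
          = ((↑u : E) + ↑v) * ((↑(u ^ (-(i : ℤ))) : E) + ↑(v ^ (-(i : ℤ))))
            - ((↑(u ^ (-(i : ℤ) + 1)) : E) + ↑(v ^ (-(i : ℤ) + 1))) := by
        rw [hr]; abel
      have hP : (↑(u ^ (-(i : ℤ) - 1)) : E) + ↑(v ^ (-(i : ℤ) - 1))
          = (↑((u * v)⁻¹) : E) *
            (((↑u : E) + ↑v) * ((↑(u ^ (-(i : ℤ))) : E) + ↑(v ^ (-(i : ℤ))))
              - ((↑(u ^ (-(i : ℤ) + 1)) : E) + ↑(v ^ (-(i : ℤ) + 1)))) := by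
        rw [← step, ← mul_assoc, ← Units.val_mul, inv_mul_cancel, Units.val_one, one_mul]
      rw [hP]
      exact hwinv.mul_right ((hsum.mul_right ih.1).sub_right ih.2)
  intro n; exact (key n).1

lemma comm_pair (huv : u * v = v * u)
    (hhecke : ((T : E) - 1) * ((T : E) + qv • 1) = 0)
    (hTzT : (↑T⁻¹ : E) * ↑v * ↑T⁻¹ = qv⁻¹ • ↑u) (i j : ℤ) :
    Commute (T : E) ((↑(u ^ i * v ^ j) : E) + ↑(u ^ j * v ^ i)) := by
  have hC : Commute u v := huv
  have hprodE : Commute (T : E) (↑(u * v) : E) := by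
    rw [Units.val_mul]; exact comm_prod huv hhecke hTzT
  have hw : Commute (T : E) (↑((u * v) ^ j) : E) := hprodE.units_zpow_right j
  have hij : (j : ℤ) + (i - j) = i := by ring
  have k1 : (u * v) ^ j * u ^ (i - j) = u ^ i * v ^ j := by
    rw [hC.mul_zpow, mul_assoc, ((hC.symm.zpow_zpow j (i - j)).eq :
      v ^ j * u ^ (i - j) = u ^ (i - j) * v ^ j), ← mul_assoc, ← zpow_add, hij]
  have k2 : (u * v) ^ j * v ^ (i - j) = u ^ j * v ^ i := by
    rw [hC.mul_zpow, mul_assoc, ← zpow_add, hij]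
  have hmain : (↑(u ^ i * v ^ j) : E) + ↑(u ^ j * v ^ i)
      = (↑((u * v) ^ j) : E) * ((↑(u ^ (i - j)) : E) + ↑(v ^ (i - j))) := by
    rw [mul_add, ← Units.val_mul, ← Units.val_mul, k1, k2]
  rw [hmain]
  exact hw.mul_right (commP huv hhecke hTzT (i - j))

end HeckeAux

set_option maxHeartbeats 1000000
/-- `a : (ℤ × ℤ) →₀ Kq` encodes the Laurent polynomial
Σ a(i,j)·z₁^i z₂^j ∈ K[z₁^{±1}, z₂^{±1}], evaluated at the commuting invertible
operators z₁, z₂ on V₂. -/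
theorem stmt6 (V : ℕ → Type*) [∀ k, AddCommGroup (V k)] [∀ k, Module Kq (V k)]
    (D : BqtDatum V) (a : (ℤ × ℤ) →₀ Kq)
    (hsym : ∀ x y : ℤ, a (x, y) = a (y, x)) :
    (D.dm 0 ∘ₗ D.dm 1) ∘ₗ
      (((D.z 2 1 : Module.End Kq (V 2)) - qv • (D.z 2 2 : Module.End Kq (V 2))) *
        (a.sum fun p c => c •
          ((D.z 2 1 ^ p.1 * D.z 2 2 ^ p.2 : (Module.End Kq (V 2))ˣ) : Module.End Kq (V 2)))) ∘ₗ
      (D.dp 1 ∘ₗ D.dp 0) = 0 := by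
  classical
  haveI : CharZero Kq :=
    charZero_of_injective_algebraMap
      (IsFractionRing.injective (MvPolynomial (Fin 2) ℚ) Kq)
  set u := D.z 2 1 with hu
  set v := D.z 2 2 with hv
  set T := D.T 2 1 with hT
  have huv : u * v = v * u := D.z_comm 2 1 2 le_rfl (by norm_num) (by norm_num) (by norm_num)
  have hhecke : ((T : Module.End Kq (V 2)) - 1) * ((T : Module.End Kq (V 2)) + qv • 1) = 0 :=
    D.hecke 2 1 le_rfl le_rfl
  have hTzT : ((↑T⁻¹ : Module.End Kq (V 2))) * ↑v * ↑T⁻¹ = qv⁻¹ • (↑u : Module.End Kq (V 2)) :=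
    D.TzT 2 1 le_rfl le_rfl
  set M : ℤ × ℤ → Module.End Kq (V 2) := fun p => ((u ^ p.1 * v ^ p.2 : (Module.End Kq (V 2))ˣ) : Module.End Kq (V 2)) with hM
  set A : Module.End Kq (V 2) := a.sum fun p c => c • M p with hA
  -- commutation of T with A
  have hTA : (T : Module.End Kq (V 2)) * A = A * (T : Module.End Kq (V 2)) := by
    set g : ℤ × ℤ → Module.End Kq (V 2) := fun p =>
      a p • ((T : Module.End Kq (V 2)) * M p - M p * (T : Module.End Kq (V 2))) with hg
    have hsum0 : ∑ p ∈ a.support, g p = 0 := by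
      have hswap : ∑ p ∈ a.support, g p = ∑ p ∈ a.support, g (Prod.swap p) := by
        refine Finset.sum_equiv (Equiv.prodComm ℤ ℤ) (fun p => ?_) (fun p _ => ?_)
        · simp only [Finsupp.mem_support_iff, Equiv.prodComm_apply]
          constructor
          · intro h h2; apply h
            have : a p.swap = a p := by
              rw [show p.swap = (p.2, p.1) from rfl, hsym p.2 p.1]
            rw [← this, h2]
          · intro h h2; apply h
            rw [show p.swap = (p.2, p.1) from rfl, hsym p.2 p.1, ← h2]
        · simp [Prod.swap_swap]
      have hpair : ∀ p ∈ a.support, g p + g (Prod.swap p) = 0 := by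
        intro p _
        have hc : (T : Module.End Kq (V 2)) * (M p + M (Prod.swap p))
            = (M p + M (Prod.swap p)) * (T : Module.End Kq (V 2)) :=
          comm_pair huv hhecke hTzT p.1 p.2
        have ha : a (Prod.swap p) = a p := by
          rw [show Prod.swap p = (p.2, p.1) from rfl, hsym p.2 p.1]
        rw [hg]
        simp only []
        rw [ha, ← smul_add]
        have hz : (T : Module.End Kq (V 2)) * M p - M p * (T : Module.End Kq (V 2))
            + ((T : Module.End Kq (V 2)) * M (Prod.swap p)
              - M (Prod.swap p) * (T : Module.End Kq (V 2))) = 0 := by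
          rw [mul_add, add_mul] at hc
          rw [sub_add_sub_comm, hc, sub_self]
        rw [hz, smul_zero]
      have h2 : (∑ p ∈ a.support, g p) + (∑ p ∈ a.support, g p) = 0 := by
        nth_rewrite 2 [hswap]
        rw [← Finset.sum_add_distrib]
        exact Finset.sum_eq_zero hpair
      have h3 : (2 : Kq) • (∑ p ∈ a.support, g p) = 0 := by rw [two_smul]; exact h2
      calc ∑ p ∈ a.support, g p
          = (2 : Kq)⁻¹ • ((2 : Kq) • ∑ p ∈ a.support, g p) := by
            rw [smul_smul, inv_mul_cancel₀ (two_ne_zero), one_smul]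
        _ = 0 := by rw [h3, smul_zero]
    have expand : (T : Module.End Kq (V 2)) * A - A * (T : Module.End Kq (V 2))
        = ∑ p ∈ a.support, g p := by
      rw [hA, Finsupp.sum, Finset.mul_sum, Finset.sum_mul, ← Finset.sum_sub_distrib]
      refine Finset.sum_congr rfl fun p _ => ?_
      rw [hg]
      simp only []
      rw [mul_smul_comm, smul_mul_assoc, smul_sub]
    exact sub_eq_zero.mp (expand.trans hsum0)
  -- the eigenvalue computation
  have hTx : (T : Module.End Kq (V 2)) * ↑u
      = ↑v * ↑T + (qv - 1) • (↑v : Module.End Kq (V 2)) := hTu hhecke hTzT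
  have hTy : (T : Module.End Kq (V 2)) * ↑v
      = ↑u * ↑T - (qv - 1) • (↑v : Module.End Kq (V 2)) := hTv hhecke hTzT
  set x : Module.End Kq (V 2) := ↑u with hx
  set y : Module.End Kq (V 2) := ↑v with hy
  set t : Module.End Kq (V 2) := ↑T with ht
  set W : Module.End Kq (V 2) := (x - qv • y) * A with hW
  have key1 : t * W = ((y * A) - qv • (x * A)) * t + (qv * qv - 1) • (y * A) := by
    have h1 : t * W = (t * x) * A - qv • ((t * y) * A) := by
      rw [hW, ← mul_assoc, mul_sub, mul_smul_comm, sub_mul, smul_mul_assoc]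
    rw [h1, hTx, hTy, add_mul, sub_mul, smul_mul_assoc,
      mul_assoc y t A, hTA, ← mul_assoc y A t, mul_assoc x t A, hTA, ← mul_assoc x A t,
      sub_mul (y * A), smul_mul_assoc]
    exact helperB qv _ _ _
  set DD : V 2 →ₗ[Kq] V 0 := D.dm 0 ∘ₗ D.dm 1 with hDD
  set UU : V 0 →ₗ[Kq] V 2 := D.dp 1 ∘ₗ D.dp 0 with hUU
  have hDDt : DD ∘ₗ t = DD := D.dmdmT 0
  have htUU : t ∘ₗ UU = UU := D.Tdpdp 0
  have key2 : t ∘ₗ (W ∘ₗ UU) = (-qv) • (W ∘ₗ UU) := by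
    have e0 : t ∘ₗ (W ∘ₗ UU) = (t * W) ∘ₗ UU := by
      rw [← LinearMap.comp_assoc]; rfl
    rw [e0, key1, LinearMap.add_comp, LinearMap.smul_comp]
    have e1 : (((y * A) - qv • (x * A)) * t) ∘ₗ UU = ((y * A) - qv • (x * A)) ∘ₗ UU := by
      rw [show ((y * A) - qv • (x * A)) * t = ((y * A) - qv • (x * A)) ∘ₗ t from rfl,
        LinearMap.comp_assoc, htUU]
    rw [e1, hW, sub_mul, smul_mul_assoc]
    simp only [LinearMap.sub_comp, LinearMap.smul_comp]
    exact helperA qv _ _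
  have final : DD ∘ₗ (W ∘ₗ UU) = (-qv) • (DD ∘ₗ (W ∘ₗ UU)) := by
    conv_lhs => rw [← hDDt, LinearMap.comp_assoc, key2]
    rw [LinearMap.comp_smul]
  have hzero : ((1 : Kq) + qv) • (DD ∘ₗ (W ∘ₗ UU)) = 0 := by
    rw [add_smul, one_smul]
    nth_rewrite 1 [final]
    exact helperC qv _
  have : DD ∘ₗ (W ∘ₗ UU) = 0 := by
    calc DD ∘ₗ (W ∘ₗ UU)
        = ((1 : Kq) + qv)⁻¹ • (((1 : Kq) + qv) • (DD ∘ₗ (W ∘ₗ UU))) := by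
          rw [smul_smul, inv_mul_cancel₀ one_add_qv_ne_zero, one_smul]
      _ = 0 := by rw [hzero, smul_zero]
  exact this


end
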